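/- arXiv:2605.30502 — 2 statements merged into one kernel-verified Lean document; each statement's English description precedes it below -/
import Mathlib

section
/- Let f : ℝ^d → ℝ be convex with nonempty set of minimizers X⋆ and minimum value f⋆. Fix α, β > 0 and reals ε, δ, D with δ ≥ 2ε > 0 and D > 0, and set η = ε/(4β). Suppose f_η : ℝ^d → ℝ is convex and differentiable with (α/η)-Lipschitz gradient and satisfies f(x) ≤ f_η(x) ≤ f(x) + βη for all x ∈ ℝ^d. Let (x^(k)) be the iterates of the accelerated method applied to f_η (with smoothness constant α/η) from an initialization x^(0). If f(x^(0)) − f⋆ ≥ δ and dist(x^(0), X⋆) ≤ D, then there exists a natural number k with k ≤ √(16αβD²/(ε(δ − (3/2)ε))) such that f(x^(k)) ≤ f(x^(0)) − ε. -/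
/-!
Smoothing costs at most `β η = ε / 4`, so it suffices to bring `fη` close to its value at a
minimizer `x⋆` of `f` with `‖x₀ - x⋆‖ ≤ D`. For the `L = 4αβ/ε`-smooth function `fη`, Nesterov's
method satisfies the potential estimate `θₖ² (fη xₖ₊₁ - fη u) ≤ L/2 ‖x₀ - u‖²` with
`θₖ ≥ (k + 2)/2`, so once `4 θₖ² > 4LD² / (δ - 3ε/2)` the gap `f xₖ₊₁ - f⋆` is below
`δ/2 - ε/2`. That `√(4LD² / (δ - 3ε/2)) ≥ 1`, so that at least one step fits in the budget, comes
from the descent lemma at `x⋆`: as `fη x⋆` is within `ε/4` of `inf fη`, `‖∇fη x⋆‖² ≤ Lε/2`,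
whence `δ ≤ f x₀ - f⋆ ≤ √(Lε/2) D + LD²/2 + ε/4`.
-/

open RealInnerProductSpace Set AffineMap

section Smooth

variable {E : Type*} [NormedAddCommGroup E] [InnerProductSpace ℝ E] [CompleteSpace E]
  {h : E → ℝ} {h' : E → E} {g a b : E} {L : ℝ}

theorem HasGradientAt.hasDerivAt_comp_lineMap {t : ℝ} (hg : HasGradientAt h g (lineMap a b t)) :
    HasDerivAt (h ∘ lineMap a b) ⟪g, b - a⟫ t := by
  simpa using hg.hasFDerivAt.comp_hasDerivAt t (hasDerivAt_lineMap (a := a) (b := b))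

theorem ConvexOn.add_inner_le_of_hasGradientAt (hc : ConvexOn ℝ univ h) (hg : HasGradientAt h g a)
    (b : E) : h a + ⟪g, b - a⟫ ≤ h b := by
  have hφ : ConvexOn ℝ univ (h ∘ lineMap a b) := hc.comp_affineMap (lineMap a b)
  have hslope := hφ.le_slope_of_hasDerivAt (mem_univ 0) (mem_univ 1) one_pos
    (HasGradientAt.hasDerivAt_comp_lineMap (by simpa using hg))
  simp only [slope_def_field, Function.comp_apply, lineMap_apply_one, lineMap_apply_zero, sub_zero,
    div_one] at hslope
  linarith

theorem le_add_inner_add_sq_of_lipschitz_gradient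
    (hg : ∀ z, HasGradientAt h (h' z) z) (hlip : ∀ z w, ‖h' z - h' w‖ ≤ L * ‖z - w‖) (a b : E) :
    h b ≤ h a + ⟪h' a, b - a⟫ + L / 2 * ‖b - a‖ ^ 2 := by
  set ψ : ℝ → ℝ := fun t => (h ∘ lineMap a b) t - t * ⟪h' a, b - a⟫ - L / 2 * t ^ 2 * ‖b - a‖ ^ 2
  have hψ : ∀ t, HasDerivAt ψ
      (⟪h' (lineMap a b t), b - a⟫ - ⟪h' a, b - a⟫ - L * t * ‖b - a‖ ^ 2) t := fun t =>
    ((((hg (lineMap a b t)).hasDerivAt_comp_lineMap (a := a) (b := b)).sub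
      ((hasDerivAt_id t).mul_const ⟪h' a, b - a⟫)).sub
      (((hasDerivAt_pow 2 t).const_mul (L / 2)).mul_const (‖b - a‖ ^ 2))).congr_deriv
      (by push_cast; ring)
  have hderiv : ∀ t ∈ interior (Icc (0:ℝ) 1),
      ⟪h' (lineMap a b t), b - a⟫ - ⟪h' a, b - a⟫ - L * t * ‖b - a‖ ^ 2 ≤ 0 := by
    intro t ht
    rw [interior_Icc] at ht
    have hdist : ‖lineMap a b t - a‖ = t * ‖b - a‖ := by
      rw [← vsub_eq_sub, lineMap_vsub_left, norm_smul, Real.norm_of_nonneg ht.1.le, vsub_eq_sub]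
    rw [sub_nonpos]
    calc ⟪h' (lineMap a b t), b - a⟫ - ⟪h' a, b - a⟫
        = ⟪h' (lineMap a b t) - h' a, b - a⟫ := (inner_sub_left _ _ _).symm
      _ ≤ ‖h' (lineMap a b t) - h' a‖ * ‖b - a‖ := real_inner_le_norm _ _
      _ ≤ L * ‖lineMap a b t - a‖ * ‖b - a‖ := by gcongr; exact hlip _ _
      _ = L * t * ‖b - a‖ ^ 2 := by rw [hdist]; ring
  have hanti := antitoneOn_of_hasDerivWithinAt_nonpos (convex_Icc 0 1)
    (fun t _ => (hψ t).continuousAt.continuousWithinAt) (fun t _ => (hψ t).hasDerivWithinAt) hderiv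
  have := hanti (left_mem_Icc.2 zero_le_one) (right_mem_Icc.2 zero_le_one) zero_le_one
  simp only [ψ, Function.comp_apply, lineMap_apply_one, lineMap_apply_zero, one_mul, one_pow,
    mul_one, zero_mul, ne_eq, OfNat.ofNat_ne_zero, not_false_eq_true, zero_pow, mul_zero,
    sub_zero] at this
  linarith

theorem gradient_step_le_sub_sq_norm (hL : 0 < L)
    (hg : ∀ z, HasGradientAt h (h' z) z) (hlip : ∀ z w, ‖h' z - h' w‖ ≤ L * ‖z - w‖) (z : E) :
    h (z - (1 / L) • h' z) ≤ h z - ‖h' z‖ ^ 2 / (2 * L) := by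
  have hdesc := le_add_inner_add_sq_of_lipschitz_gradient hg hlip z (z - (1 / L) • h' z)
  rw [sub_sub_cancel_left, inner_neg_right, real_inner_smul_right, real_inner_self_eq_norm_sq,
    norm_neg, norm_smul, Real.norm_of_nonneg (by positivity)] at hdesc
  convert hdesc using 1
  field_simp
  ring

theorem sq_norm_gradient_le_of_le_add {m σ : ℝ} (hL : 0 < L)
    (hg : ∀ z, HasGradientAt h (h' z) z) (hlip : ∀ z w, ‖h' z - h' w‖ ≤ L * ‖z - w‖)
    (hlow : ∀ w, m ≤ h w) {z : E} (hz : h z ≤ m + σ) :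
    ‖h' z‖ ^ 2 ≤ 2 * L * σ := by
  have hstep := gradient_step_le_sub_sq_norm hL hg hlip z
  have : ‖h' z‖ ^ 2 / (2 * L) ≤ σ := by linarith [hlow (z - (1 / L) • h' z)]
  rwa [div_le_iff₀ (by positivity), mul_comm] at this

theorem sub_le_sqrt_mul_norm_add_sq_of_le_add {m σ : ℝ} (hL : 0 < L)
    (hg : ∀ z, HasGradientAt h (h' z) z) (hlip : ∀ z w, ‖h' z - h' w‖ ≤ L * ‖z - w‖)
    (hlow : ∀ w, m ≤ h w) {z : E} (hz : h z ≤ m + σ) (x : E) :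
    h x - h z ≤ √(2 * L * σ) * ‖x - z‖ + L / 2 * ‖x - z‖ ^ 2 := by
  have hgrad : ‖h' z‖ ≤ √(2 * L * σ) :=
    Real.le_sqrt_of_sq_le (sq_norm_gradient_le_of_le_add hL hg hlip hlow hz)
  have hinner : ⟪h' z, x - z⟫ ≤ √(2 * L * σ) * ‖x - z‖ :=
    (real_inner_le_norm _ _).trans (by gcongr)
  linarith [le_add_inner_add_sq_of_lipschitz_gradient hg hlip z x]

theorem ConvexOn.gradient_step_sub_le (hc : ConvexOn ℝ univ h) (hL : 0 < L)
    (hg : ∀ z, HasGradientAt h (h' z) z) (hlip : ∀ z w, ‖h' z - h' w‖ ≤ L * ‖z - w‖) (z u : E) :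
    h (z - (1 / L) • h' z) - h u ≤
      L / 2 * (‖z - u‖ ^ 2 - ‖z - (1 / L) • h' z - u‖ ^ 2) := by
  have hstep := gradient_step_le_sub_sq_norm hL hg hlip z
  have hconv := hc.add_inner_le_of_hasGradientAt (hg z) u
  have hnorm : ‖z - (1 / L) • h' z - u‖ ^ 2
      = ‖z - u‖ ^ 2 - 2 * (1 / L) * ⟪h' z, z - u⟫ + (1 / L) ^ 2 * ‖h' z‖ ^ 2 := by
    rw [sub_right_comm, norm_sub_sq_real, real_inner_smul_right, norm_smul,
      Real.norm_of_nonneg (by positivity), mul_pow, real_inner_comm]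
    ring
  have hinner : ⟪h' z, u - z⟫ = -⟪h' z, z - u⟫ := by rw [← inner_neg_right, neg_sub]
  have hrhs : L / 2 * (‖z - u‖ ^ 2 - ‖z - (1 / L) • h' z - u‖ ^ 2)
      = ⟪h' z, z - u⟫ - ‖h' z‖ ^ 2 / (2 * L) := by
    rw [hnorm]
    field_simp
    ring
  rw [hrhs]
  linarith

end Smooth

section Theta

variable {θ : ℕ → ℝ}

theorem theta_succ_mul_sub_one (hθ : ∀ k, θ (k + 1) = (1 + √(1 + 4 * θ k ^ 2)) / 2) (k : ℕ) :
    θ (k + 1) * (θ (k + 1) - 1) = θ k ^ 2 := by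
  have hsq : √(1 + 4 * θ k ^ 2) ^ 2 = 1 + 4 * θ k ^ 2 := Real.sq_sqrt (by positivity)
  rw [hθ k]
  linear_combination hsq / 4

theorem half_add_one_le_theta (hθ0 : θ 0 = 1)
    (hθ : ∀ k, θ (k + 1) = (1 + √(1 + 4 * θ k ^ 2)) / 2) (k : ℕ) :
    ((k : ℝ) + 2) / 2 ≤ θ k := by
  induction k with
  | zero => norm_num [hθ0]
  | succ k ih =>
    have hsqrt : 2 * θ k ≤ √(1 + 4 * θ k ^ 2) :=
      Real.le_sqrt_of_sq_le (by nlinarith)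
    rw [hθ k]
    push_cast
    linarith

theorem one_le_theta (hθ0 : θ 0 = 1)
    (hθ : ∀ k, θ (k + 1) = (1 + √(1 + 4 * θ k ^ 2)) / 2) (k : ℕ) : 1 ≤ θ k := by
  have := half_add_one_le_theta hθ0 hθ k
  have : (0 : ℝ) ≤ k := k.cast_nonneg
  linarith

end Theta

structure IsAcceleratedGradientSeq {E : Type*} [AddCommGroup E] [Module ℝ E]
    (h' : E → E) (L : ℝ) (x y : ℕ → E) (θ : ℕ → ℝ) : Prop where
  theta_zero : θ 0 = 1
  y_zero : y 0 = x 0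
  x_succ : ∀ k, x (k + 1) = y k - (1 / L) • h' (y k)
  theta_succ : ∀ k, θ (k + 1) = (1 + √(1 + 4 * θ k ^ 2)) / 2
  y_succ : ∀ k, y (k + 1) = x (k + 1) + ((θ k - 1) / θ (k + 1)) • (x (k + 1) - x k)

namespace IsAcceleratedGradientSeq

variable {E : Type*} [NormedAddCommGroup E] [InnerProductSpace ℝ E] [CompleteSpace E]
  {h : E → ℝ} {h' : E → E} {L : ℝ} {x y : ℕ → E} {θ : ℕ → ℝ}

theorem potential_succ_le (hacc : IsAcceleratedGradientSeq h' L x y θ)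
    (hc : ConvexOn ℝ univ h) (hL : 0 < L) (hg : ∀ z, HasGradientAt h (h' z) z)
    (hlip : ∀ z w, ‖h' z - h' w‖ ≤ L * ‖z - w‖) (u : E) (k : ℕ) :
    θ (k + 1) ^ 2 * (h (x (k + 2)) - h u)
        + L / 2 * ‖θ (k + 1) • x (k + 2) - (θ (k + 1) - 1) • x (k + 1) - u‖ ^ 2
      ≤ θ k ^ 2 * (h (x (k + 1)) - h u)
        + L / 2 * ‖θ k • x (k + 1) - (θ k - 1) • x k - u‖ ^ 2 := by
  have hyk := hacc.y_succ k
  set t := θ (k + 1)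
  have ht1 : 1 ≤ t := one_le_theta hacc.theta_zero hacc.theta_succ (k + 1)
  have ht : t ≠ 0 := (zero_lt_one.trans_le ht1).ne'
  have htt : t * (t - 1) = θ k ^ 2 := theta_succ_mul_sub_one hacc.theta_succ k
  -- chosen so that `t • (y (k + 1) - w)` and `t • (x (k + 2) - w)` are the vectors of the potentials
  set w := (1 - t⁻¹) • x (k + 1) + t⁻¹ • u
  have hw : t ^ 2 * h w ≤ θ k ^ 2 * h (x (k + 1)) + t * h u := by
    have hconv : h w ≤ (1 - t⁻¹) * h (x (k + 1)) + t⁻¹ * h u :=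
      hc.2 (mem_univ _) (mem_univ _) (sub_nonneg.2 (inv_le_one_of_one_le₀ ht1))
        (inv_nonneg.2 (zero_le_one.trans ht1)) (by ring)
    have e : t ^ 2 * ((1 - t⁻¹) * h (x (k + 1)) + t⁻¹ * h u)
        = θ k ^ 2 * h (x (k + 1)) + t * h u := by
      rw [← htt]; field_simp
    linarith [mul_le_mul_of_nonneg_left hconv (sq_nonneg t)]
  have hstep := hc.gradient_step_sub_le hL hg hlip (y (k + 1)) w
  rw [← hacc.x_succ] at hstep
  have hy : t • (y (k + 1) - w) = θ k • x (k + 1) - (θ k - 1) • x k - u := by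
    rw [hyk]
    match_scalars <;> field_simp
    ring
  have hx : t • (x (k + 2) - w) = t • x (k + 2) - (t - 1) • x (k + 1) - u := by
    match_scalars <;> field_simp
  have hsq : ∀ v : E, t ^ 2 * ‖v‖ ^ 2 = ‖t • v‖ ^ 2 := fun v => by
    rw [norm_smul, mul_pow, Real.norm_eq_abs, sq_abs]
  have hsplit : t ^ 2 * h u = θ k ^ 2 * h u + t * h u := by linear_combination h u * htt
  rw [← hy, ← hx, ← hsq, ← hsq]
  linarith [mul_le_mul_of_nonneg_left hstep (sq_nonneg t)]

theorem potential_le (hacc : IsAcceleratedGradientSeq h' L x y θ)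
    (hc : ConvexOn ℝ univ h) (hL : 0 < L) (hg : ∀ z, HasGradientAt h (h' z) z)
    (hlip : ∀ z w, ‖h' z - h' w‖ ≤ L * ‖z - w‖) (u : E) (k : ℕ) :
    θ k ^ 2 * (h (x (k + 1)) - h u) + L / 2 * ‖θ k • x (k + 1) - (θ k - 1) • x k - u‖ ^ 2
      ≤ L / 2 * ‖x 0 - u‖ ^ 2 := by
  induction k with
  | zero =>
    have h0 := hc.gradient_step_sub_le hL hg hlip (y 0) u
    rw [← hacc.x_succ, hacc.y_zero] at h0
    simp only [hacc.theta_zero, one_pow, one_mul, one_smul, sub_self, zero_smul, sub_zero]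
    linarith
  | succ k ih => exact (hacc.potential_succ_le hc hL hg hlip u k).trans ih

theorem sub_le_div_sq_theta (hacc : IsAcceleratedGradientSeq h' L x y θ)
    (hc : ConvexOn ℝ univ h) (hL : 0 < L) (hg : ∀ z, HasGradientAt h (h' z) z)
    (hlip : ∀ z w, ‖h' z - h' w‖ ≤ L * ‖z - w‖) (u : E) (k : ℕ) :
    h (x (k + 1)) - h u ≤ L / 2 * ‖x 0 - u‖ ^ 2 / θ k ^ 2 := by
  have hθ : 0 < θ k ^ 2 := by
    have := one_le_theta hacc.theta_zero hacc.theta_succ k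
    positivity
  have hpot := hacc.potential_le hc hL hg hlip u k
  have hnn : 0 ≤ L / 2 * ‖θ k • x (k + 1) - (θ k - 1) • x k - u‖ ^ 2 := by positivity
  rw [le_div_iff₀ hθ, mul_comm]
  linarith

end IsAcceleratedGradientSeq

theorem exists_succ_le_sqrt_and_div_sq_lt {A c : ℝ} {θ : ℕ → ℝ} (hc : 0 < c) (hcA : c ≤ 4 * A)
    (hθ : ∀ k : ℕ, ((k : ℝ) + 2) / 2 ≤ θ k) :
    ∃ m : ℕ, ((m + 1 : ℕ) : ℝ) ≤ √(4 * A / c) ∧ A / θ m ^ 2 < c := by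
  set Q := 4 * A / c
  have hQ : 1 ≤ Q := (one_le_div hc).2 hcA
  have hfloor : 1 ≤ ⌊√Q⌋₊ := Nat.le_floor (by simpa using Real.one_le_sqrt.2 hQ)
  obtain ⟨m, hm⟩ : ∃ m, ⌊√Q⌋₊ = m + 1 := ⟨⌊√Q⌋₊ - 1, by omega⟩
  refine ⟨m, hm ▸ Nat.floor_le (Real.sqrt_nonneg Q), ?_⟩
  have hlt : √Q < 2 * θ m := by
    have := Nat.lt_floor_add_one √Q
    rw [hm] at this
    push_cast at this
    linarith [hθ m]
  have hθm : 0 < θ m := by linarith [Real.sqrt_nonneg Q]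
  have hQθ : Q < 4 * θ m ^ 2 := by
    rw [← Real.sq_sqrt (zero_le_one.trans hQ)]
    nlinarith [Real.sqrt_nonneg Q]
  rw [div_lt_iff₀ hc] at hQθ
  rw [div_lt_iff₀ (by positivity)]
  linarith

theorem sub_le_four_mul_of_le_sqrt {ε δ L D : ℝ} (hε : 0 < ε) (hδε : 2 * ε ≤ δ)
    (hL : 0 ≤ L) (h : δ ≤ √(2 * L * (ε / 4)) * D + L / 2 * D ^ 2 + ε / 4) :
    δ - 3 / 2 * ε ≤ 4 * L * D ^ 2 := by
  by_contra! hlt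
  have hsq : (√(2 * L * (ε / 4)) * D) ^ 2 < (δ / 4) ^ 2 := by
    rw [mul_pow, Real.sq_sqrt (by positivity)]
    nlinarith
  have := lt_of_pow_lt_pow_left₀ 2 (by linarith) hsq
  nlinarith

theorem IsClosed.exists_mem_norm_sub_le_of_infDist_le {E : Type*} [NormedAddCommGroup E]
    [ProperSpace E] {s : Set E} (hs : IsClosed s) (hne : s.Nonempty) {x : E} {D : ℝ}
    (hD : Metric.infDist x s ≤ D) : ∃ y ∈ s, ‖x - y‖ ≤ D := by
  obtain ⟨y, hy, hdist⟩ := hs.exists_infDist_eq_dist hne x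
  exact ⟨y, hy, by rwa [← dist_eq_norm, ← hdist]⟩

theorem smoothing_decrement_general {d : ℕ} (f : EuclideanSpace ℝ (Fin d) → ℝ)
    (hconv : ConvexOn ℝ Set.univ f)
    (fstar : ℝ) (Xstar : Set (EuclideanSpace ℝ (Fin d)))
    (hXstar : Xstar = {z | f z = fstar})
    (hlb : ∀ z, fstar ≤ f z)
    (hne : Xstar.Nonempty)
    (α β ε δ D : ℝ) (hα : 0 < α) (hβ : 0 < β)
    (hε : 0 < ε) (hδε : δ ≥ 2 * ε)
    (η : ℝ) (hη : η = ε / (4 * β))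
    (fη : EuclideanSpace ℝ (Fin d) → ℝ)
    (fη' : EuclideanSpace ℝ (Fin d) → EuclideanSpace ℝ (Fin d))
    (hηconv : ConvexOn ℝ Set.univ fη)
    (hηgrad : ∀ z, HasGradientAt fη (fη' z) z)
    (hηlip : ∀ z w, ‖fη' z - fη' w‖ ≤ (α / η) * ‖z - w‖)
    (happrox : ∀ z, f z ≤ fη z ∧ fη z ≤ f z + β * η)
    (x y : ℕ → EuclideanSpace ℝ (Fin d)) (θ : ℕ → ℝ)
    (hθ0 : θ 0 = 1) (hy0 : y 0 = x 0)
    (hx : ∀ k, x (k + 1) = y k - (1 / (α / η)) • fη' (y k))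
    (hθ : ∀ k, θ (k + 1) = (1 + Real.sqrt (1 + 4 * (θ k) ^ 2)) / 2)
    (hy : ∀ k, y (k + 1) = x (k + 1) + ((θ k - 1) / θ (k + 1)) • (x (k + 1) - x k))
    (hgap : f (x 0) - fstar ≥ δ)
    (hdist : Metric.infDist (x 0) Xstar ≤ D) :
    ∃ k : ℕ, (k : ℝ) ≤ Real.sqrt (16 * α * β * D ^ 2 / (ε * (δ - (3 / 2) * ε))) ∧
      f (x k) ≤ f (x 0) - ε := by
  have hη0 : 0 < η := by rw [hη]; positivity
  have hL : 0 < α / η := div_pos hα hη0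
  have hβη : β * η = ε / 4 := by rw [hη]; field_simp
  have hQ : 16 * α * β * D ^ 2 / (ε * (δ - 3 / 2 * ε))
      = 4 * (α / η / 2 * D ^ 2) / ((δ - 3 / 2 * ε) / 2) := by
    rw [hη]; field_simp; ring
  have hclosed : IsClosed Xstar :=
    hXstar ▸ isClosed_eq (continuousOn_univ.1 (hconv.continuousOn isOpen_univ)) continuous_const
  obtain ⟨xs, hxs, hxsD⟩ := hclosed.exists_mem_norm_sub_le_of_infDist_le hne hdist
  replace hxs : f xs = fstar := by rwa [hXstar] at hxs
  have hlow : ∀ z, fstar ≤ fη z := fun z => (hlb z).trans (happrox z).1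
  have hnear : fη xs ≤ fstar + ε / 4 := by linarith [(happrox xs).2]
  have hinit : δ ≤ √(2 * (α / η) * (ε / 4)) * D + α / η / 2 * D ^ 2 + ε / 4 := by
    have hsub := sub_le_sqrt_mul_norm_add_sq_of_le_add hL hηgrad hηlip hlow hnear (x 0)
    have hmono : √(2 * (α / η) * (ε / 4)) * ‖x 0 - xs‖ + α / η / 2 * ‖x 0 - xs‖ ^ 2
        ≤ √(2 * (α / η) * (ε / 4)) * D + α / η / 2 * D ^ 2 := by gcongr
    linarith [(happrox (x 0)).1]
  obtain ⟨m, hm, hsmall⟩ := exists_succ_le_sqrt_and_div_sq_lt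
    (A := α / η / 2 * D ^ 2) (c := (δ - 3 / 2 * ε) / 2) (by linarith)
    (by linarith [sub_le_four_mul_of_le_sqrt hε hδε hL.le hinit]) (half_add_one_le_theta hθ0 hθ)
  refine ⟨m + 1, hQ ▸ hm, ?_⟩
  have hacc : IsAcceleratedGradientSeq fη' (α / η) x y θ := ⟨hθ0, hy0, hx, hθ, hy⟩
  have hrate := hacc.sub_le_div_sq_theta hηconv hL hηgrad hηlip xs m
  have hmono : α / η / 2 * ‖x 0 - xs‖ ^ 2 / θ m ^ 2 ≤ α / η / 2 * D ^ 2 / θ m ^ 2 := by gcongr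
  linarith [(happrox (x (m + 1))).1]

/-- **Decrement guarantee for the smoothing method** (Proposition: smoothing method).
`f` is convex with nonempty minimizer set `Xstar` and minimum value `fstar`.
With `η = ε/(4β)`, the function `fη` is convex, differentiable with `(α/η)`-Lipschitz
gradient, and satisfies `f z ≤ fη z ≤ f z + β·η` for all `z`. Running the accelerated
method on `fη` from `x 0`, if `f (x 0) - fstar ≥ δ ≥ 2ε > 0` and
`dist (x 0) Xstar ≤ D`, there is `k ≤ √(16αβD²/(ε(δ - (3/2)ε)))` with
`f (x k) ≤ f (x 0) - ε`. -/
theorem smoothing_decrement {d : ℕ} (f : EuclideanSpace ℝ (Fin d) → ℝ)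
    (hconv : ConvexOn ℝ Set.univ f)
    (fstar : ℝ) (Xstar : Set (EuclideanSpace ℝ (Fin d)))
    (hXstar : Xstar = {z | f z = fstar})
    (hlb : ∀ z, fstar ≤ f z)
    (hne : Xstar.Nonempty)
    (α β ε δ D : ℝ) (hα : 0 < α) (hβ : 0 < β)
    (hε : 0 < ε) (hδε : δ ≥ 2 * ε) (hD : 0 < D)
    (η : ℝ) (hη : η = ε / (4 * β))
    (fη : EuclideanSpace ℝ (Fin d) → ℝ)
    (fη' : EuclideanSpace ℝ (Fin d) → EuclideanSpace ℝ (Fin d))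
    (hηconv : ConvexOn ℝ Set.univ fη)
    (hηgrad : ∀ z, HasGradientAt fη (fη' z) z)
    (hηlip : ∀ z w, ‖fη' z - fη' w‖ ≤ (α / η) * ‖z - w‖)
    (happrox : ∀ z, f z ≤ fη z ∧ fη z ≤ f z + β * η)
    (x y : ℕ → EuclideanSpace ℝ (Fin d)) (θ : ℕ → ℝ)
    (hθ0 : θ 0 = 1) (hy0 : y 0 = x 0)
    (hx : ∀ k, x (k + 1) = y k - (1 / (α / η)) • fη' (y k))
    (hθ : ∀ k, θ (k + 1) = (1 + Real.sqrt (1 + 4 * (θ k) ^ 2)) / 2)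
    (hy : ∀ k, y (k + 1) = x (k + 1) + ((θ k - 1) / θ (k + 1)) • (x (k + 1) - x k))
    (hgap : f (x 0) - fstar ≥ δ)
    (hdist : Metric.infDist (x 0) Xstar ≤ D) :
    ∃ k : ℕ, (k : ℝ) ≤ Real.sqrt (16 * α * β * D ^ 2 / (ε * (δ - (3 / 2) * ε))) ∧
      f (x k) ≤ f (x 0) - ε :=
  smoothing_decrement_general f hconv fstar Xstar hXstar hlb hne α β ε δ D hα hβ hε hδε η hη fη fη'
    hηconv hηgrad hηlip happrox x y θ hθ0 hy0 hx hθ hy hgap hdist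
end

section
/- Let 0 < a < b and 0 < ε < Δ₀, and for real y > 1 define L(y) = log(log y) − (log y)/(y − 1) + ((b − a)/(y − 1))·log(Δ₀/ε). If log(Δ₀/ε) > max{e²/(b − a)², 1/(b − a)}, then inf_{y > 1} exp(L(y)) ≥ (1/2)·log(log(Δ₀/ε)). -/
set_option maxHeartbeats 800000


lemma exp_ge_e_mul (x : ℝ) : Real.exp 1 * x ≤ Real.exp x := by
  have h := Real.add_one_le_exp (x - 1)
  have h2 : Real.exp 1 * Real.exp (x-1) = Real.exp x := by
    rw [← Real.exp_add]; ring_nf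
  nlinarith [Real.exp_pos 1, Real.exp_pos (x-1)]

lemma loglog_aux (c M : ℝ) (hc : 0 < c) (hM : (Real.exp 1)^2 / c^2 < M)
    (hT : 0 < Real.log M) (y : ℝ) (hy : 1 < y) :
    (1/2) * Real.log M ≤ Real.log y * Real.exp ((c*M - Real.log y)/(y-1)) := by
  have hMpos : 0 < M := lt_trans (by positivity) hM
  set T := Real.log M with hTdef
  set E := Real.exp (T/2) with hEdef
  have hEpos : 0 < E := Real.exp_pos _
  have hEE : E * E = M := by
    rw [hEdef, ← Real.exp_add]
    have : T/2 + T/2 = T := by ring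
    rw [this, hTdef, Real.exp_log hMpos]
  have he2 : 2 ≤ Real.exp 1 := by nlinarith [Real.add_one_le_exp 1]
  have hE1 : 1 ≤ E := Real.one_le_exp (by linarith)
  have hTE : T/2 ≤ E := by nlinarith [Real.add_one_le_exp (T/2)]
  have hcE : Real.exp 1 ≤ c * E := by
    have h1 : (Real.exp 1)^2 < c^2 * M := by
      rw [div_lt_iff₀ (by positivity)] at hM; nlinarith
    nlinarith [Real.exp_pos 1, mul_pos hc hEpos]
  have hcM : Real.exp 1 * E ≤ c * M := by nlinarith
  have hTM : T ≤ c * M := by nlinarith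
  set t := Real.log y with htdef
  have hy0 : (0:ℝ) < y := by linarith
  have ht : 0 < t := Real.log_pos hy
  have hs : 0 < y - 1 := by linarith
  have hts : t ≤ y - 1 := Real.log_le_sub_one_of_pos hy0
  have hty2 : y - 1 ≤ t * y := by
    have h := Real.log_le_sub_one_of_pos (show (0:ℝ) < 1/y by positivity)
    rw [Real.log_div one_ne_zero (ne_of_gt hy0), Real.log_one] at h
    have h1 : (1:ℝ)/y * y = 1 := by field_simp
    nlinarith
  have hyt : y = Real.exp t := (Real.exp_log hy0).symm
  set u := (c*M - t)/(y-1) with hudef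
  have huy : u * (y - 1) = c*M - t := by rw [hudef]; field_simp
  by_cases hA : c*M ≤ t
  · -- Case A : exponent ≥ -1
    have hu : (-1 : ℝ) ≤ u := by
      rw [hudef, le_div_iff₀ hs]
      nlinarith [mul_pos hc hMpos]
    have hex : Real.exp (-1) ≤ Real.exp u := Real.exp_le_exp.2 hu
    have hinv : Real.exp 1 * Real.exp (-1) = 1 := by
      rw [← Real.exp_add]; norm_num
    have h1 : c*M*Real.exp (-1) ≤ t * Real.exp u :=
      mul_le_mul hA hex (Real.exp_pos _).le ht.le
    have h2 : Real.exp 1 * E * Real.exp (-1) ≤ c*M*Real.exp (-1) :=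
      mul_le_mul_of_nonneg_right hcM (Real.exp_pos _).le
    have h3 : Real.exp 1 * E * Real.exp (-1) = E := by
      calc Real.exp 1 * E * Real.exp (-1) = (Real.exp 1 * Real.exp (-1)) * E := by ring
      _ = E := by rw [hinv]; ring
    linarith
  · push_neg at hA
    by_cases hB : T/2 ≤ t
    · -- Case B : exponent ≥ 0, exp ≥ 1
      have hu0 : (0:ℝ) ≤ u := by
        rw [hudef]; exact div_nonneg (by linarith) hs.le
      nlinarith [Real.one_le_exp hu0]
    · push_neg at hB
      have hu0 : (0:ℝ) ≤ u := by
        rw [hudef]; exact div_nonneg (by linarith) hs.le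
      have ht_half : t ≤ c*M/2 := by nlinarith
      by_cases hC1 : t ≤ 1
      · -- Case C1 : small y
        have hye : y ≤ Real.exp 1 := by rw [hyt]; exact Real.exp_le_exp.2 hC1
        have h1 : (c*M - t)/y ≤ t * u := by
          rw [div_le_iff₀ hy0]
          have e1 : u * (y-1) ≤ u * (t*y) := mul_le_mul_of_nonneg_left hty2 hu0
          have e2 : u * (t*y) = t*u*y := by ring
          linarith
        have h2 : (c*M/2)/y ≤ (c*M - t)/y := by gcongr; linarith
        have h3 : (c*M/2)/Real.exp 1 ≤ (c*M/2)/y :=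
          div_le_div_of_nonneg_left (by nlinarith) hy0 hye
        have h4 : Real.exp 1 * ((c*M/2)/Real.exp 1) = c*M/2 := by
          rw [mul_comm, div_mul_cancel₀ _ (Real.exp_ne_zero 1)]
        have h5 : t * (Real.exp 1 * u) ≤ t * Real.exp u :=
          mul_le_mul_of_nonneg_left (exp_ge_e_mul u) ht.le
        have h6 : Real.exp 1 * ((c*M/2)/Real.exp 1) ≤ Real.exp 1 * (t * u) :=
          mul_le_mul_of_nonneg_left (le_trans h3 (le_trans h2 h1)) (Real.exp_pos 1).le
        nlinarith
      · push_neg at hC1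
        have hyE : y ≤ E := by
          rw [hyt, hEdef]; exact Real.exp_le_exp.2 (by linarith)
        by_cases hC2a : T/4 ≤ t
        · -- Case C2a
          have hu1 : (1:ℝ) ≤ u := by
            rw [hudef, le_div_iff₀ hs]
            nlinarith
          have hex : Real.exp 1 ≤ Real.exp u := Real.exp_le_exp.2 hu1
          nlinarith [mul_le_mul hC2a hex (by linarith) ht.le]
        · push_neg at hC2a
          -- Case C2b : u ≥ (e/2) * exp(T/4)
          have hexpT4 : Real.exp 1 * (T/4) ≤ Real.exp (T/4) := exp_ge_e_mul (T/4)
          have hTt : Real.exp (T/4) ≤ Real.exp (T/2 - t) :=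
            Real.exp_le_exp.2 (by linarith)
          have hEt : Real.exp (T/2 - t) * Real.exp t = E := by
            rw [hEdef, ← Real.exp_add]; ring_nf
          have hu_big : Real.exp 1/2 * Real.exp (T/4) ≤ u := by
            rw [hudef, le_div_iff₀ hs]
            -- (e/2) * exp(T/4) * (y-1) ≤ c*M - t
            -- since y - 1 ≤ exp t and (e/2)*exp(T/2-t)*exp t = (e/2)*E ≤ c*M/2, t ≤ c*M/2
            have k1 : Real.exp 1/2 * Real.exp (T/4) * (y-1) ≤ Real.exp 1/2 * Real.exp (T/2 - t) * Real.exp t := by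
              have : y - 1 ≤ Real.exp t := by rw [← hyt]; linarith
              have e4pos : (0:ℝ) < Real.exp 1/2 * Real.exp (T/4) := by positivity
              nlinarith [mul_le_mul_of_nonneg_right hTt (show (0:ℝ) ≤ y - 1 by linarith),
                mul_le_mul_of_nonneg_left this (by positivity : (0:ℝ) ≤ Real.exp 1/2 * Real.exp (T/2 - t))]
            have k2 : Real.exp 1/2 * Real.exp (T/2 - t) * Real.exp t = Real.exp 1 * E / 2 := by
              rw [← hEt]; ring
            nlinarith
          have hexu : Real.exp 1 * u ≤ Real.exp u := exp_ge_e_mul u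
          have h1 : (1:ℝ) * Real.exp u ≤ t * Real.exp u :=
            mul_le_mul_of_nonneg_right (by linarith) (Real.exp_pos _).le
          -- exp u ≥ e*u ≥ e*(e/2)*exp(T/4) ≥ (e^2/2)*(e*T/4) = e^3 T/8 ≥ T/2
          have h2 : Real.exp 1 * (Real.exp 1/2 * Real.exp (T/4)) ≤ Real.exp 1 * u :=
            mul_le_mul_of_nonneg_left hu_big (Real.exp_pos 1).le
          have h3 : Real.exp 1 * (Real.exp 1/2 * (Real.exp 1 * (T/4))) ≤ Real.exp 1 * (Real.exp 1/2 * Real.exp (T/4)) := by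
            nlinarith [Real.exp_pos 1]
          have he3 : (8:ℝ) ≤ Real.exp 1 ^ 3 := by nlinarith [he2, sq_nonneg (Real.exp 1)]
          have h4 : Real.exp 1 * (Real.exp 1/2 * (Real.exp 1 * (T/4))) = Real.exp 1 ^ 3 * T/8 := by ring
          have hfin : 0 ≤ (Real.exp 1 ^ 3 - 8) * T := mul_nonneg (by linarith) hT.le
          linarith [h1, hexu, h2, h3, h4, hfin]


/-- **Uniform doubly logarithmic lower bound for `exp(L(y))`** (Lemma: loglog bound).
With `L(y) = log(log y) - (log y)/(y-1) + ((b-a)/(y-1))·log(Δ₀/ε)` for `y > 1`,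
if `log(Δ₀/ε) > max{e²/(b-a)², 1/(b-a)}` then
`inf_{y>1} exp(L(y)) ≥ (1/2)·log(log(Δ₀/ε))`. -/
theorem loglog_bound (a b ε Δ₀ : ℝ)
    (ha : 0 < a) (hab : a < b) (hε : 0 < ε) (hεΔ : ε < Δ₀)
    (L : ℝ → ℝ)
    (hL : ∀ y, 1 < y → L y = Real.log (Real.log y) - Real.log y / (y - 1) +
      (b - a) / (y - 1) * Real.log (Δ₀ / ε))
    (hbig : Real.log (Δ₀ / ε) >
      max ((Real.exp 1) ^ 2 / (b - a) ^ 2) (1 / (b - a))) :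
    (1 / 2) * Real.log (Real.log (Δ₀ / ε)) ≤
      sInf {z : ℝ | ∃ y : ℝ, 1 < y ∧ z = Real.exp (L y)} := by
  have hc : 0 < b - a := by linarith
  have hM2 : (Real.exp 1) ^ 2 / (b - a) ^ 2 < Real.log (Δ₀ / ε) :=
    lt_of_le_of_lt (le_max_left _ _) hbig
  have hne : {z : ℝ | ∃ y : ℝ, 1 < y ∧ z = Real.exp (L y)}.Nonempty :=
    ⟨Real.exp (L 2), Set.mem_setOf_eq ▸ ⟨2, one_lt_two, rfl⟩⟩
  apply le_csInf hne
  rintro z ⟨y, hy, rfl⟩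
  have ht : 0 < Real.log y := Real.log_pos hy
  have hs : 0 < y - 1 := by linarith
  have hid : Real.exp (L y) =
      Real.log y * Real.exp (((b - a) * Real.log (Δ₀ / ε) - Real.log y) / (y - 1)) := by
    rw [hL y hy]
    have he : Real.log (Real.log y) - Real.log y / (y - 1) +
        (b - a) / (y - 1) * Real.log (Δ₀ / ε)
        = Real.log (Real.log y) + ((b - a) * Real.log (Δ₀ / ε) - Real.log y) / (y - 1) := by
      field_simp
      ring
    rw [he, Real.exp_add, Real.exp_log ht]
  rw [hid]
  by_cases hT : 0 < Real.log (Real.log (Δ₀ / ε))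
  · exact loglog_aux (b - a) (Real.log (Δ₀ / ε)) hc hM2 hT y hy
  · push_neg at hT
    have hpos : 0 < Real.log y *
        Real.exp (((b - a) * Real.log (Δ₀ / ε) - Real.log y) / (y - 1)) :=
      mul_pos ht (Real.exp_pos _)
    nlinarith
end
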